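/- Let Ω and Δ be locally compact Hausdorff spaces, X, Y Banach spaces, σ : Δ → Ω an injective map, and θ : C₀(Ω, X) → C₀(Δ, Y) a ℂ-linear map (not assumed bounded) satisfying θ(f·φ)(ν) = θ(f)(ν)·φ(σ(ν)) for all f ∈ C₀(Ω,X), φ ∈ C₀(Ω), ν ∈ Δ. Then there exist a finite subset T ⊆ Δ and a constant κ > 0 such that ‖θ(f)(ν)‖ ≤ κ‖f‖ for all f ∈ C₀(Ω,X) and all ν ∈ Δ \ T. -/

import Mathlib

/-!
If no such `T` and `κ` exist, then for every `n` infinitely many `ν` admit a unit vector `f`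
with `4 ^ n < ‖θ f ν‖`; this gives distinct points `νₙ` and unit vectors `fₙ`. As `σ` is
injective, the points `σ νₙ` are distinct and cluster somewhere in the one-point
compactification of `Ω`, and a subsequence `σ ν_{p i}` has pairwise disjoint open
neighbourhoods `Uᵢ` carrying bumps `ψᵢ` with `ψᵢ (σ ν_{p i}) = 1`. For the gliding hump
`g = ∑ 2⁻ⁱ ψᵢ f_{p i}` the module property gives
`θ g ν_{p i} = θ (ψᵢ g) ν_{p i} = 2⁻ⁱ θ f_{p i} ν_{p i}`, so `‖θ g‖ > 2⁻ⁱ 4 ^ p i ≥ 2 ^ i`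
for every `i`.
-/

open ZeroAtInfty Filter Topology

/-- Pointwise multiplication of a `C₀` scalar function and a `C₀` vector-valued
function. -/
noncomputable def c0smul {Ω X : Type*} [TopologicalSpace Ω]
    [NormedAddCommGroup X] [NormedSpace ℂ X]
    (φ : C₀(Ω, ℂ)) (f : C₀(Ω, X)) : C₀(Ω, X) where
  toFun := fun ω => φ ω • f ω
  continuous_toFun := (φ.continuous).smul (f.continuous)
  zero_at_infty' := by
    have := (φ.zero_at_infty').smul (f.zero_at_infty')
    simpa using this

open Function Set

theorem exists_injective_forall_mem_of_antitone {α : Type*} {B : ℕ → Set α}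
    (hB : ∀ n, (B n).Infinite) (hanti : Antitone B) :
    ∃ a : ℕ → α, Injective a ∧ ∀ n, a n ∈ B n := by
  classical
  obtain ⟨q, hqB, hq⟩ := exists_seq_of_forall_finset_exists (fun b : ℕ × α => b.2 ∈ B b.1)
    (fun b c => b.1 < c.1 ∧ b.2 ≠ c.2) fun S _ => by
      obtain ⟨a, haB, haS⟩ := (hB (S.sup Prod.fst + 1)).exists_notMem_finset (S.image Prod.snd)
      exact ⟨(S.sup Prod.fst + 1, a), haB, fun b hb =>
        ⟨Nat.lt_succ_of_le (Finset.le_sup hb), fun h => haS (Finset.mem_image.2 ⟨b, hb, h⟩)⟩⟩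
  have hmono : StrictMono fun n => (q n).1 := fun m n h => (hq m n h).1
  refine ⟨fun n => (q n).2, Injective.of_lt_imp_ne fun m n h => (hq m n h).2,
    fun n => hanti (hmono.id_le n) (hqB n)⟩

theorem exists_strictMono_pairwise_disjoint_of_mapClusterPt {X : Type*} [TopologicalSpace X]
    [T2Space X] {x : ℕ → X} (hx : Injective x) {z : X} (hz : MapClusterPt z atTop x) :
    ∃ (p : ℕ → ℕ) (U : ℕ → Set X), StrictMono p ∧ (∀ i, IsOpen (U i)) ∧
      (∀ i, x (p i) ∈ U i) ∧ Pairwise (Disjoint on U) := by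
  have hfreq : ∀ W ∈ 𝓝 z, ∀ N, ∃ n, N ≤ n ∧ x n ∈ W ∧ x n ≠ z := by
    intro W hW N
    have hne : ∀ᶠ n in atTop, x n ≠ z := by
      rw [← Nat.cofinite_eq_atTop]
      exact hx.tendsto_cofinite.eventually (eventually_cofinite_ne z)
    obtain ⟨n, hnW, hnz, hnN⟩ :=
      ((hz.frequently hW).and_eventually (hne.and (eventually_ge_atTop N))).exists
    exact ⟨n, hnN, hnW, hnz⟩
  -- Since `Uᶜ ∈ 𝓝 z` for the sets chosen so far, their complements meet in a neighbourhood of `z`,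
  -- which contains a later point `x n ≠ z`; separating it from `z` gives the next set.
  obtain ⟨q, hq, hrel⟩ := exists_seq_of_forall_finset_exists
    (fun a : ℕ × Set X => IsOpen a.2 ∧ x a.1 ∈ a.2 ∧ a.2ᶜ ∈ 𝓝 z)
    (fun a b => a.1 < b.1 ∧ Disjoint a.2 b.2) fun S hS => by
      have hSz : (⋂ a ∈ S, interior a.2ᶜ) ∈ 𝓝 z :=
        (Finset.iInter_mem_sets S).2 fun a ha => interior_mem_nhds.2 (hS a ha).2.2
      obtain ⟨n, hnN, hnS, hnz⟩ := hfreq _ hSz (S.sup Prod.fst + 1)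
      obtain ⟨V, W, hV, hW, hnV, hzW, hVW⟩ := t2_separation hnz
      refine ⟨(n, V ∩ ⋂ a ∈ S, interior a.2ᶜ), ⟨?_, ⟨hnV, hnS⟩, ?_⟩, fun a ha => ⟨?_, ?_⟩⟩
      · exact hV.inter (isOpen_biInter_finset fun _ _ => isOpen_interior)
      · exact mem_of_superset (hW.mem_nhds hzW) fun y hyW hy => disjoint_left.1 hVW hy.1 hyW
      · exact Nat.lt_of_lt_of_le (Nat.lt_succ_of_le (Finset.le_sup ha)) hnN
      · exact disjoint_left.2 fun y hya hy => interior_subset (mem_iInter₂.1 hy.2 a ha) hya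
  refine ⟨fun i => (q i).1, fun i => (q i).2, fun m n h => (hrel m n h).1, fun i => (hq i).1,
    fun i => (hq i).2.1, fun m n hmn => ?_⟩
  rcases hmn.lt_or_gt with h | h
  · exact (hrel m n h).2
  · exact (hrel n m h).2.symm

theorem exists_strictMono_pairwise_disjoint_nhds {X : Type*} [TopologicalSpace X]
    [WeaklyLocallyCompactSpace X] [T2Space X] {x : ℕ → X} (hx : Injective x) :
    ∃ (p : ℕ → ℕ) (U : ℕ → Set X), StrictMono p ∧ (∀ i, IsOpen (U i)) ∧
      (∀ i, x (p i) ∈ U i) ∧ Pairwise (Disjoint on U) := by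
  obtain ⟨z, -, hz⟩ := isCompact_univ.exists_mapClusterPt (f := atTop)
    (u := ((↑) : X → OnePoint X) ∘ x) (by simp)
  obtain ⟨p, V, hp, hV, hxV, hVd⟩ :=
    exists_strictMono_pairwise_disjoint_of_mapClusterPt (OnePoint.coe_injective.comp hx) hz
  exact ⟨p, fun i => ((↑) : X → OnePoint X) ⁻¹' V i, hp,
    fun i => (hV i).preimage OnePoint.continuous_coe, hxV, fun i j h => (hVd h).preimage _⟩

namespace ZeroAtInftyContinuousMap

variable {α β : Type*} [TopologicalSpace α] [NormedAddCommGroup β]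

theorem norm_apply_le (f : C₀(α, β)) (x : α) : ‖f x‖ ≤ ‖f‖ :=
  f.toBCF.norm_coe_le_norm x

theorem norm_le_of_forall {f : C₀(α, β)} {C : ℝ} (hC : 0 ≤ C) (h : ∀ x, ‖f x‖ ≤ C) :
    ‖f‖ ≤ C :=
  (BoundedContinuousFunction.norm_le hC).mpr h

theorem tsum_apply {ι : Type*} {g : ι → C₀(α, β)} (hg : Summable g) (x : α) :
    (∑' i, g i) x = ∑' i, g i x :=
  (hg.hasSum.map (⟨⟨fun f => f x, rfl⟩, fun _ _ => rfl⟩ : C₀(α, β) →+ β)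
    ((continuous_eval_const x).comp isometry_toBCF.continuous)).tsum_eq.symm

end ZeroAtInftyContinuousMap

open ZeroAtInftyContinuousMap

theorem exists_zeroAtInfty_eq_one_support_subset {Ω : Type*} [TopologicalSpace Ω]
    [LocallyCompactSpace Ω] [RegularSpace Ω] {x : Ω} {U : Set Ω} (hU : IsOpen U) (hx : x ∈ U) :
    ∃ ψ : C₀(Ω, ℂ), ψ x = 1 ∧ ‖ψ‖ ≤ 1 ∧ support ψ ⊆ U := by
  obtain ⟨f, hfx, hfU, hfc, hf01⟩ := exists_continuous_one_zero_of_isCompact isCompact_singleton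
    hU.isClosed_compl (disjoint_singleton_left.2 (not_not.2 hx))
  refine ⟨⟨⟨fun ω => (f ω : ℂ), by fun_prop⟩, (hfc.comp_left Complex.ofReal_zero).is_zero_at_infty⟩,
    ?_, norm_le_of_forall zero_le_one fun ω => ?_, fun ω hω => ?_⟩
  · simp [hfx rfl]
  · simp [abs_of_nonneg (hf01 ω).1, (hf01 ω).2]
  · by_contra h
    exact hω (by simp [hfU h])

section c0smul

variable {Ω X : Type*} [TopologicalSpace Ω] [NormedAddCommGroup X] [NormedSpace ℂ X]

@[simp]
theorem c0smul_apply (φ : C₀(Ω, ℂ)) (f : C₀(Ω, X)) (ω : Ω) : c0smul φ f ω = φ ω • f ω := rfl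

theorem norm_c0smul_le (φ : C₀(Ω, ℂ)) (f : C₀(Ω, X)) : ‖c0smul φ f‖ ≤ ‖φ‖ * ‖f‖ :=
  norm_le_of_forall (by positivity) fun ω => by
    rw [c0smul_apply, norm_smul]
    exact mul_le_mul (norm_apply_le φ ω) (norm_apply_le f ω) (norm_nonneg _) (norm_nonneg _)

theorem c0smul_tsum_eq_of_forall_ne {ι : Type*} {φ : C₀(Ω, ℂ)} {g : ι → C₀(Ω, X)}
    (hg : Summable g) (i : ι) (h : ∀ j ≠ i, ∀ ω, φ ω ≠ 0 → g j ω = 0) : c0smul φ (∑' j, g j) = c0smul φ (g i) := by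
  ext ω
  simp only [c0smul_apply]
  by_cases hω : φ ω = 0
  · simp [hω]
  · rw [tsum_apply hg, tsum_eq_single i fun j hj => h j hj ω hω]

end c0smul

section GlidingHump

variable {Ω Δ X Y : Type*} [TopologicalSpace Ω] [TopologicalSpace Δ]
  [NormedAddCommGroup X] [NormedSpace ℂ X] [NormedAddCommGroup Y] [NormedSpace ℂ Y]

theorem exists_norm_le_one_lt_norm_apply {E : Type*} [NormedAddCommGroup E] [NormedSpace ℂ E]
    (θ : E →ₗ[ℂ] C₀(Δ, Y)) {κ : ℝ} {f : E} {ν : Δ} (h : κ * ‖f‖ < ‖θ f ν‖) :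
    ∃ g : E, ‖g‖ ≤ 1 ∧ κ < ‖θ g ν‖ := by
  have hf : f ≠ 0 := by
    rintro rfl
    simp at h
  refine ⟨(‖f‖⁻¹ : ℂ) • f, by simp [norm_smul, hf], ?_⟩
  rw [map_smul, ZeroAtInftyContinuousMap.smul_apply, norm_smul, norm_inv, Complex.norm_real,
    norm_norm, ← div_eq_inv_mul, lt_div_iff₀ (norm_pos_iff.2 hf)]
  exact h

theorem exists_norm_apply_le_mul_two_pow_of_disjoint_support [CompleteSpace X] (σ : Δ → Ω)
    (θ : C₀(Ω, X) →ₗ[ℂ] C₀(Δ, Y))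
    (hmod : ∀ (f : C₀(Ω, X)) (φ : C₀(Ω, ℂ)) (ν : Δ), θ (c0smul φ f) ν = φ (σ ν) • θ f ν)
    {f : ℕ → C₀(Ω, X)} (hf : ∀ i, ‖f i‖ ≤ 1) {ν : ℕ → Δ} {ψ : ℕ → C₀(Ω, ℂ)}
    (hψν : ∀ i, ψ i (σ (ν i)) = 1) (hψ : ∀ i, ‖ψ i‖ ≤ 1)
    (hdisj : Pairwise (Disjoint on fun i => support (ψ i))) :
    ∃ C, ∀ i, ‖θ (f i) (ν i)‖ ≤ C * 2 ^ i := by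
  set g : ℕ → C₀(Ω, X) := fun i => ((2 : ℂ)⁻¹ ^ i) • c0smul (ψ i) (f i)
  have hg_norm : ∀ i, ‖g i‖ ≤ (2⁻¹ : ℝ) ^ i := fun i => by
    calc ‖g i‖ ≤ (2⁻¹ : ℝ) ^ i * (‖ψ i‖ * ‖f i‖) := by
          simp only [g, norm_smul, norm_pow, norm_inv, Complex.norm_ofNat]
          gcongr
          exact norm_c0smul_le _ _
      _ ≤ (2⁻¹ : ℝ) ^ i := by
          grw [hψ i, hf i, one_mul, mul_one]
  have hg : Summable g :=
    .of_norm_bounded (summable_geometric_of_lt_one (by norm_num) (by norm_num)) hg_norm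
  have hdisj_g : ∀ i, ∀ j ≠ i, ∀ ω, ψ i ω ≠ 0 → g j ω = 0 := fun i j hji ω hω => by
    have : ψ j ω = 0 := notMem_support.1 fun hj => disjoint_left.1 (hdisj hji) hj hω
    simp [g, this]
  refine ⟨‖θ (∑' j, g j)‖, fun i => ?_⟩
  have heval : θ (∑' j, g j) (ν i) = (2 : ℂ)⁻¹ ^ i • θ (f i) (ν i) := by
    calc θ (∑' j, g j) (ν i) = θ (c0smul (ψ i) (∑' j, g j)) (ν i) := by rw [hmod, hψν, one_smul]
      _ = θ (c0smul (ψ i) (g i)) (ν i) := by rw [c0smul_tsum_eq_of_forall_ne hg i (hdisj_g i)]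
      _ = (2 : ℂ)⁻¹ ^ i • θ (f i) (ν i) := by
          rw [hmod, hψν, one_smul, map_smul, ZeroAtInftyContinuousMap.smul_apply, hmod, hψν,
            one_smul]
  have := norm_apply_le (θ (∑' j, g j)) (ν i)
  rw [heval, norm_smul, norm_pow, norm_inv, Complex.norm_ofNat] at this
  rwa [inv_pow, inv_mul_le_iff₀ (by positivity), mul_comm] at this

end GlidingHump

theorem stmt_8_general
    {Ω Δ : Type*} [TopologicalSpace Ω] [LocallyCompactSpace Ω] [T2Space Ω]
    [TopologicalSpace Δ]
    {X Y : Type*} [NormedAddCommGroup X] [NormedSpace ℂ X] [CompleteSpace X]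
    [NormedAddCommGroup Y] [NormedSpace ℂ Y]
    (σ : Δ → Ω) (hσ : Function.Injective σ)
    (θ : C₀(Ω, X) →ₗ[ℂ] C₀(Δ, Y))
    (hmod : ∀ (f : C₀(Ω, X)) (φ : C₀(Ω, ℂ)) (ν : Δ),
      θ (c0smul φ f) ν = φ (σ ν) • θ f ν) :
    ∃ (T : Finset Δ) (κ : ℝ), 0 < κ ∧
      ∀ (f : C₀(Ω, X)) (ν : Δ), ν ∉ T → ‖θ f ν‖ ≤ κ * ‖f‖ := by
  by_contra! hunbdd
  set B : ℕ → Set Δ := fun n => {ν | ∃ f : C₀(Ω, X), ‖f‖ ≤ 1 ∧ 4 ^ n < ‖θ f ν‖}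
  have hB : ∀ n, (B n).Infinite := fun n hfin => by
    obtain ⟨f, ν, hνT, hf⟩ := hunbdd hfin.toFinset (4 ^ n) (by positivity)
    exact hνT (hfin.mem_toFinset.2 (exists_norm_le_one_lt_norm_apply θ hf))
  have hB_anti : Antitone B := fun m n hmn ν ⟨f, hf, hfν⟩ =>
    ⟨f, hf, (pow_le_pow_right₀ (by norm_num) hmn).trans_lt hfν⟩
  obtain ⟨ν, hν, hνB⟩ := exists_injective_forall_mem_of_antitone hB hB_anti
  choose f hf hfν using hνB
  obtain ⟨p, U, hp, hU, hνU, hU_disj⟩ := exists_strictMono_pairwise_disjoint_nhds (hσ.comp hν)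
  choose ψ hψν hψ hψU using fun i => exists_zeroAtInfty_eq_one_support_subset (hU i) (hνU i)
  obtain ⟨C, hC⟩ := exists_norm_apply_le_mul_two_pow_of_disjoint_support σ θ hmod (f := f ∘ p)
    (fun i => hf (p i)) hψν hψ fun i j hij => (hU_disj hij).mono (hψU i) (hψU j)
  obtain ⟨i, hi⟩ := pow_unbounded_of_one_lt C one_lt_two
  have : (4 : ℝ) ^ i < 4 ^ i := calc
    (4 : ℝ) ^ i ≤ 4 ^ p i := pow_le_pow_right₀ (by norm_num) (hp.id_le i)
    _ < ‖θ (f (p i)) (ν (p i))‖ := hfν (p i)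
    _ ≤ C * 2 ^ i := hC i
    _ < 2 ^ i * 2 ^ i := by gcongr
    _ = 4 ^ i := by rw [← mul_pow]; norm_num
  exact lt_irrefl _ this

theorem stmt_8
    {Ω Δ : Type*} [TopologicalSpace Ω] [LocallyCompactSpace Ω] [T2Space Ω]
    [TopologicalSpace Δ] [LocallyCompactSpace Δ] [T2Space Δ]
    {X Y : Type*} [NormedAddCommGroup X] [NormedSpace ℂ X] [CompleteSpace X]
    [NormedAddCommGroup Y] [NormedSpace ℂ Y] [CompleteSpace Y]
    (σ : Δ → Ω) (hσ : Function.Injective σ)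
    (θ : C₀(Ω, X) →ₗ[ℂ] C₀(Δ, Y))
    (hmod : ∀ (f : C₀(Ω, X)) (φ : C₀(Ω, ℂ)) (ν : Δ),
      θ (c0smul φ f) ν = φ (σ ν) • θ f ν) :
    ∃ (T : Finset Δ) (κ : ℝ), 0 < κ ∧
      ∀ (f : C₀(Ω, X)) (ν : Δ), ν ∉ T → ‖θ f ν‖ ≤ κ * ‖f‖ :=
  stmt_8_general σ hσ θ hmod
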